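/- Ordering of reweighted masses (Lemma 5). Let p : ℝ → (0,∞) be a density with x ↦ p(−x)/p(x) strictly increasing on (0,∞). Let r : ℝ → (0,∞) be even (r(−x) = r(x) for all x) and strictly decreasing on (0,∞), and let C > 0 satisfy C·r(1) = 1, so that C·r(x) > 1 for x ∈ [0,1) and C·r(x) < 1 for x > 1. Suppose q(x) := C·r(x)·p(x) integrates to 1. Define F₁ := ∫_1^∞ p(−x) dx, F₂ := ∫_0^1 p(−x) dx, F₃ := ∫_0^1 p(x) dx, F₄ := ∫_1^∞ p(x) dx, and G₁, G₂, G₃, G₄ analogously with q in place of p. Then 1 < G₂/F₂ < G₃/F₃ and G₁/F₁ < G₄/F₄ < 1. -/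

import Mathlib

/-!
Write `w = C r`. By evenness of `r`, `G₁` and `G₂` are the integrals of `w(x) p(-x)` over `(1, ∞)`
and `(0, 1)`. The outer inequalities hold because `q = w p` lies strictly above `p` where `w > 1`
and strictly below it where `w < 1`. The middle ones are a strict Chebyshev inequality: on `(0, ∞)`
the weight `w` decreases while `p(-x)/p(x)` increases, so the kernel
`(w x - w y) (p(-x) p(y) - p(-y) p(x))` is negative off the diagonal, while its integral over
`s × s` is `2 (∫ₛ w p(-·) · ∫ₛ p - ∫ₛ w p · ∫ₛ p(-·))`.
-/

open MeasureTheory Set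

theorem sub_mul_sub_neg_of_strictAntiOn_of_strictMonoOn_div {α : Type*} [LinearOrder α]
    {s : Set α} {f a b : α → ℝ} (hf : StrictAntiOn f s) (hba : StrictMonoOn (fun x => b x / a x) s)
    (ha : ∀ x ∈ s, 0 < a x) {x y : α} (hx : x ∈ s) (hy : y ∈ s) (hxy : x ≠ y) :
    (f x - f y) * (b x * a y - b y * a x) < 0 := by
  wlog hlt : x < y generalizing x y
  · have := this hy hx hxy.symm (hxy.lt_or_gt.resolve_left hlt)
    linarith
  have hcross : b x * a y < b y * a x := by
    have := hba hx hy hlt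
    rwa [div_lt_div_iff₀ (ha x hx) (ha y hy)] at this
  exact mul_neg_of_pos_of_neg (sub_pos.mpr (hf hx hy hlt)) (sub_neg.mpr hcross)

namespace MeasureTheory

variable {α : Type*} [MeasurableSpace α] {μ : Measure α}

theorem integral_pos_of_ae_pos {f : α → ℝ} (hμ : μ ≠ 0) (hf : Integrable f μ)
    (hpos : ∀ᵐ x ∂μ, 0 < f x) : 0 < ∫ x, f x ∂μ := by
  rw [integral_pos_iff_support_of_nonneg_ae (hpos.mono fun _ hx => hx.le) hf]
  calc 0 < μ univ := Measure.measure_univ_pos.mpr hμ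
    _ ≤ μ (Function.support f) :=
      measure_mono_ae (hpos.mono fun x hx _ => hx.ne')

theorem setIntegral_lt_setIntegral_of_forall_lt {s : Set α} {f g : α → ℝ}
    (hs : MeasurableSet s) (hμs : μ s ≠ 0) (hf : IntegrableOn f s μ) (hg : IntegrableOn g s μ)
    (hlt : ∀ x ∈ s, f x < g x) : ∫ x in s, f x ∂μ < ∫ x in s, g x ∂μ := by
  rw [← sub_pos, ← integral_sub hg hf]
  exact integral_pos_of_ae_pos (by rwa [Ne, Measure.restrict_eq_zero])
    (hg.sub hf) ((ae_restrict_mem hs).mono fun x hx => sub_pos.mpr (hlt x hx))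

theorem setIntegral_pos_of_forall_pos {s : Set α} {f : α → ℝ} (hs : MeasurableSet s)
    (hμs : μ s ≠ 0) (hf : IntegrableOn f s μ) (hpos : ∀ x ∈ s, 0 < f x) :
    0 < ∫ x in s, f x ∂μ := by
  simpa using setIntegral_lt_setIntegral_of_forall_lt hs hμs integrableOn_zero hf hpos

theorem ae_prod_fst_ne_snd [MeasurableEq α] (μ : Measure α) [SFinite μ] [NullSingletonClass μ] :
    ∀ᵐ z ∂μ.prod μ, z.1 ≠ z.2 :=
  (Measure.ae_prod_iff_ae_ae measurableSet_diagonal.compl).mpr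
    (ae_of_all _ fun x => (Measure.ae_ne μ x).mono fun _ hy => hy.symm)

theorem setIntegral_mul_mul_setIntegral_lt_of_kernel_neg [MeasurableEq α] [SFinite μ]
    [NullSingletonClass μ] {s : Set α} {f a b : α → ℝ} (hs : MeasurableSet s) (hμs : μ s ≠ 0)
    (ha : IntegrableOn a s μ) (hb : IntegrableOn b s μ)
    (hfa : IntegrableOn (fun x => f x * a x) s μ) (hfb : IntegrableOn (fun x => f x * b x) s μ)
    (hkernel : ∀ x ∈ s, ∀ y ∈ s, x ≠ y → (f x - f y) * (b x * a y - b y * a x) < 0) :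
    (∫ x in s, f x * b x ∂μ) * (∫ x in s, a x ∂μ) <
      (∫ x in s, f x * a x ∂μ) * (∫ x in s, b x ∂μ) := by
  set ν := μ.restrict s
  have hν : ν ≠ 0 := by rwa [Ne, Measure.restrict_eq_zero]
  have hνν : ν.prod ν ≠ 0 := by
    rw [← Measure.measure_univ_pos, ← univ_prod_univ, Measure.prod_prod]
    have hν' := Measure.measure_univ_ne_zero.mpr hν
    exact ENNReal.mul_pos hν' hν'
  have hprod : ∀ {g h : α → ℝ}, IntegrableOn g s μ → IntegrableOn h s μ →
      Integrable (fun z : α × α => g z.1 * h z.2) (ν.prod ν) := fun hg hh => hg.mul_prod hh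
  set K : α × α → ℝ := fun z => (f z.1 - f z.2) * (b z.1 * a z.2 - b z.2 * a z.1)
  have hK : K = fun z => (f z.1 * b z.1 * a z.2 + a z.1 * (f z.2 * b z.2)) -
      (f z.1 * a z.1 * b z.2 + b z.1 * (f z.2 * a z.2)) := funext fun z => by ring
  have hKint : Integrable K (ν.prod ν) := by
    rw [hK]
    exact ((hprod hfb ha).add (hprod ha hfb)).sub ((hprod hfa hb).add (hprod hb hfa))
  have hKintegral : ∫ z, K z ∂ν.prod ν =
      2 * ((∫ x in s, f x * b x ∂μ) * (∫ x in s, a x ∂μ) -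
        (∫ x in s, f x * a x ∂μ) * (∫ x in s, b x ∂μ)) := by
    rw [hK, integral_sub, integral_add (hprod hfb ha) (hprod ha hfb),
      integral_add (hprod hfa hb) (hprod hb hfa),
      integral_prod_mul (fun x => f x * b x) a, integral_prod_mul a (fun x => f x * b x),
      integral_prod_mul (fun x => f x * a x) b, integral_prod_mul b (fun x => f x * a x)]
    · ring
    exacts [(hprod hfb ha).add (hprod ha hfb), (hprod hfa hb).add (hprod hb hfa)]
  have hKneg : ∀ᵐ z ∂ν.prod ν, 0 < -K z := by
    filter_upwards [ae_prod_fst_ne_snd ν, Measure.quasiMeasurePreserving_fst.ae (ae_restrict_mem hs),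
      Measure.quasiMeasurePreserving_snd.ae (ae_restrict_mem hs)] with z hne h₁ h₂
    exact neg_pos.mpr (hkernel z.1 h₁ z.2 h₂ hne)
  have := integral_pos_of_ae_pos (f := fun z => -K z) hνν hKint.neg hKneg
  rw [integral_neg, hKintegral] at this
  linarith

end MeasureTheory

theorem reweighted_mass_ordering_general
    (p r : ℝ → ℝ) (C : ℝ)
    (hppos : ∀ x, 0 < p x) (hpint : MeasureTheory.Integrable p)
    (hpratio : StrictMonoOn (fun x => p (-x) / p x) (Set.Ioi 0))
    (hreven : ∀ x, r (-x) = r x)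
    (hranti : StrictAntiOn r (Set.Ioi 0))
    (hC : 0 < C)
    (hrgt : ∀ x, 0 ≤ x → x < 1 → 1 < C * r x)
    (hrlt : ∀ x, 1 < x → C * r x < 1)
    (hqone : (∫ x, C * r x * p x) = 1) :
    (1 < (∫ x in Set.Ioo (0:ℝ) 1, C * r (-x) * p (-x)) / (∫ x in Set.Ioo (0:ℝ) 1, p (-x)) ∧
      (∫ x in Set.Ioo (0:ℝ) 1, C * r (-x) * p (-x)) / (∫ x in Set.Ioo (0:ℝ) 1, p (-x)) <
        (∫ x in Set.Ioo (0:ℝ) 1, C * r x * p x) / (∫ x in Set.Ioo (0:ℝ) 1, p x)) ∧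
    ((∫ x in Set.Ioi (1:ℝ), C * r (-x) * p (-x)) / (∫ x in Set.Ioi (1:ℝ), p (-x)) <
        (∫ x in Set.Ioi (1:ℝ), C * r x * p x) / (∫ x in Set.Ioi (1:ℝ), p x) ∧
      (∫ x in Set.Ioi (1:ℝ), C * r x * p x) / (∫ x in Set.Ioi (1:ℝ), p x) < 1) := by
  have hqint : Integrable fun x => C * r x * p x := .of_integral_ne_zero (by simp [hqone])
  have hpint' : Integrable fun x => p (-x) := hpint.comp_neg
  have hqint' : Integrable fun x => C * r x * p (-x) := by simpa only [hreven] using hqint.comp_neg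
  have hw : StrictAntiOn (fun x => C * r x) (Ioi 0) :=
    fun x hx y hy hxy => mul_lt_mul_of_pos_left (hranti hx hy hxy) hC
  have hcheb : ∀ s ⊆ Ioi (0:ℝ), MeasurableSet s → volume s ≠ 0 →
      (∫ x in s, C * r x * p (-x)) * (∫ x in s, p x) <
        (∫ x in s, C * r x * p x) * (∫ x in s, p (-x)) := fun s hs hsm hμs =>
    setIntegral_mul_mul_setIntegral_lt_of_kernel_neg hsm hμs hpint.integrableOn hpint'.integrableOn
      hqint.integrableOn hqint'.integrableOn fun x hx y hy hxy =>
        sub_mul_sub_neg_of_strictAntiOn_of_strictMonoOn_div (hw.mono hs) (hpratio.mono hs)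
          (fun x _ => hppos x) hx hy hxy
  have hIoo : volume (Ioo (0:ℝ) 1) ≠ 0 := by simp
  have hIoi : volume (Ioi (1:ℝ)) ≠ 0 := by simp
  have hF₂ := setIntegral_pos_of_forall_pos measurableSet_Ioo hIoo hpint'.integrableOn fun x _ => hppos (-x)
  have hF₃ := setIntegral_pos_of_forall_pos measurableSet_Ioo hIoo hpint.integrableOn fun x _ => hppos x
  have hF₁ := setIntegral_pos_of_forall_pos measurableSet_Ioi hIoi hpint'.integrableOn fun x _ => hppos (-x)
  have hF₄ := setIntegral_pos_of_forall_pos measurableSet_Ioi hIoi hpint.integrableOn fun x _ => hppos x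
  simp only [hreven]
  refine ⟨⟨?_, ?_⟩, ?_, ?_⟩
  · exact (one_lt_div hF₂).mpr <| setIntegral_lt_setIntegral_of_forall_lt measurableSet_Ioo hIoo
      hpint'.integrableOn hqint'.integrableOn fun x hx =>
        lt_mul_of_one_lt_left (hppos _) (hrgt x hx.1.le hx.2)
  · exact (div_lt_div_iff₀ hF₂ hF₃).mpr <|
      hcheb _ (fun x hx => hx.1) measurableSet_Ioo hIoo
  · exact (div_lt_div_iff₀ hF₁ hF₄).mpr <|
      hcheb _ (Ioi_subset_Ioi zero_le_one) measurableSet_Ioi hIoi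
  · exact (div_lt_one hF₄).mpr <| setIntegral_lt_setIntegral_of_forall_lt measurableSet_Ioi hIoi
      hqint.integrableOn hpint.integrableOn fun x hx => mul_lt_of_lt_one_left (hppos x) (hrlt x hx)

/-- Lemma 5: ordering of reweighted masses. -/
theorem reweighted_mass_ordering
    (p r : ℝ → ℝ) (C : ℝ)
    (hppos : ∀ x, 0 < p x) (hpint : MeasureTheory.Integrable p) (hpone : (∫ x, p x) = 1)
    (hpratio : StrictMonoOn (fun x => p (-x) / p x) (Set.Ioi 0))
    (hrpos : ∀ x, 0 < r x) (hreven : ∀ x, r (-x) = r x)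
    (hranti : StrictAntiOn r (Set.Ioi 0))
    (hC : 0 < C) (hC1 : C * r 1 = 1)
    (hrgt : ∀ x, 0 ≤ x → x < 1 → 1 < C * r x)
    (hrlt : ∀ x, 1 < x → C * r x < 1)
    (hqone : (∫ x, C * r x * p x) = 1) :
    (1 < (∫ x in Set.Ioo (0:ℝ) 1, C * r (-x) * p (-x)) / (∫ x in Set.Ioo (0:ℝ) 1, p (-x)) ∧
      (∫ x in Set.Ioo (0:ℝ) 1, C * r (-x) * p (-x)) / (∫ x in Set.Ioo (0:ℝ) 1, p (-x)) <
        (∫ x in Set.Ioo (0:ℝ) 1, C * r x * p x) / (∫ x in Set.Ioo (0:ℝ) 1, p x)) ∧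
    ((∫ x in Set.Ioi (1:ℝ), C * r (-x) * p (-x)) / (∫ x in Set.Ioi (1:ℝ), p (-x)) <
        (∫ x in Set.Ioi (1:ℝ), C * r x * p x) / (∫ x in Set.Ioi (1:ℝ), p x) ∧
      (∫ x in Set.Ioi (1:ℝ), C * r x * p x) / (∫ x in Set.Ioi (1:ℝ), p x) < 1) :=
  reweighted_mass_ordering_general p r C hppos hpint hpratio hreven hranti hC hrgt hrlt hqone
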